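/- arXiv:2302.12962 — 2 statements merged into one kernel-verified Lean document; each statement's English description precedes it below -/
import Mathlib

section
/- For ξ ∈ ℝ with |ξ| > k_s, define γ_p = i√(ξ² - k_p²), γ_s = i√(ξ² - k_s²), and let M(ξ) = (i/(ξ² + γ_pγ_s)) [[ω²γ_p, -ξω² + ξμ(ξ² + γ_pγ_s)], [ξω² - ξμ(ξ² + γ_pγ_s), ω²γ_s]]. Then -Re M(ξ) := -(M + M̄ᵀ)/2 is a positive definite Hermitian 2×2 matrix. -/
open Complex Matrix
open scoped ComplexOrder

/-!
Write `a = √(ξ² - k_p²)`, `b = √(ξ² - k_s²)`, so `γ_pγ_s = -ab` and `D = ξ² + γ_pγ_s = ξ² - ab > 0`.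
Then `M` is Hermitian and `-Re M = -M = [[ω²a/D, -iβ/D], [iβ/D, ω²b/D]]` with
`β = ξ(μD - ω²) = -μξb(a - b)`, using `ω² = μk_s²`. Positive definiteness reduces to the
determinant inequality `ξ²b(a - b)² < k_s⁴a`, which follows from `(a - b)(a + b) = k_s² - k_p²`
and `ξ²b < a(a + b)²`; the latter holds because `ξ² > k_s² > 2k_p²`, i.e. because `λ > 0`.
-/

theorem posDef_fin_two_of_pos_of_normSq_lt {a d : ℝ} {b : ℂ} (ha : 0 < a)
    (hdet : normSq b < a * d) : (!![(a : ℂ), b; star b, (d : ℂ)]).PosDef := by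
  -- Schur complement: the matrix is `Lᴴ * diagonal ![a, d - |b|²/a] * L`.
  set L : Matrix (Fin 2) (Fin 2) ℂ := !![1, b / a; 0, 1]
  have hL : Function.Injective L.mulVec :=
    mulVec_injective_iff_isUnit.mpr <| (isUnit_iff_isUnit_det L).mpr (by simp [L, det_fin_two_of])
  have hdiag : (diagonal ![(a : ℂ), ((d - normSq b / a : ℝ) : ℂ)]).PosDef := by
    refine posDef_diagonal_iff.mpr fun i ↦ ?_
    fin_cases i
    · exact zero_lt_real.mpr ha
    · exact zero_lt_real.mpr (by rw [sub_pos, div_lt_iff₀ ha]; linarith)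
  convert hdiag.conjTranspose_mul_mul_same hL using 1
  have ha' : (a : ℂ) ≠ 0 := ofReal_ne_zero.mpr ha.ne'
  ext i j
  fin_cases i <;> fin_cases j <;>
    simp [L, mul_apply, Fin.sum_univ_two, normSq_eq_conj_mul_self] <;> field_simp
  ring

theorem neg_half_smul_add_conjTranspose {D α β δ : ℝ} (hD : D ≠ 0) {M : Matrix (Fin 2) (Fin 2) ℂ}
    (hM : M = (I / D) • !![I * α, β; -β, I * δ]) :
    (-(1 / 2 : ℂ)) • (M + Mᴴ) =
      !![((α / D : ℝ) : ℂ), -(I * (β / D : ℝ)); star (-(I * (β / D : ℝ))), ((δ / D : ℝ) : ℂ)] := by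
  subst hM
  have hD' : (D : ℂ) ≠ 0 := ofReal_ne_zero.mpr hD
  ext i j
  fin_cases i <;> fin_cases j <;> simp [conjTranspose_apply] <;> field_simp <;> ring_nf <;> simp [I_sq]

theorem sq_mul_mul_sub_lt {kp ks ξ a b : ℝ} (hkp : 0 < kp) (h2kp : 2 * kp ^ 2 < ks ^ 2)
    (hξ : ks ^ 2 < ξ ^ 2) (ha : a ^ 2 = ξ ^ 2 - kp ^ 2) (hb : b ^ 2 = ξ ^ 2 - ks ^ 2)
    (ha0 : 0 < a) (hb0 : 0 < b) : (ξ * b * (a - b)) ^ 2 < ks ^ 4 * (a * b) := by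
  have hab : (a - b) * (a + b) = ks ^ 2 - kp ^ 2 := by linear_combination ha - hb
  have hkp2 : 0 < kp ^ 2 := pow_pos hkp 2
  have hd : (ks ^ 2 - kp ^ 2) ^ 2 < ks ^ 4 := by
    nlinarith [mul_pos hkp2 (show 0 < 2 * ks ^ 2 - kp ^ 2 by linarith)]
  have hξb : ξ ^ 2 * b < a * (a + b) ^ 2 := by
    nlinarith [pow_pos ha0 3, mul_pos ha0 (mul_pos hb0 hb0),
      mul_pos hb0 (show 0 < ξ ^ 2 - 2 * kp ^ 2 by linarith)]
  have hξ0 : 0 < ξ ^ 2 * b := mul_pos (by nlinarith) hb0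
  have key : ξ ^ 2 * b * (a - b) ^ 2 * (a + b) ^ 2 < ks ^ 4 * a * (a + b) ^ 2 :=
    calc ξ ^ 2 * b * (a - b) ^ 2 * (a + b) ^ 2 = ξ ^ 2 * b * (ks ^ 2 - kp ^ 2) ^ 2 := by
          rw [← hab]; ring
      _ < ξ ^ 2 * b * ks ^ 4 := mul_lt_mul_of_pos_left hd hξ0
      _ < a * (a + b) ^ 2 * ks ^ 4 := mul_lt_mul_of_pos_right hξb (by nlinarith)
      _ = ks ^ 4 * a * (a + b) ^ 2 := by ring
  have := lt_of_mul_lt_mul_right key (sq_nonneg (a + b))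
  nlinarith

theorem two_mul_sq_div_sqrt_lt_sq_div_sqrt {lam mu om : ℝ} (hlam : 0 < lam) (hmu : 0 < mu)
    (hom : 0 < om) : 2 * (om / Real.sqrt (2 * mu + lam)) ^ 2 < (om / Real.sqrt mu) ^ 2 := by
  rw [div_pow, div_pow, Real.sq_sqrt hmu.le, Real.sq_sqrt (by positivity), mul_div_assoc',
    div_lt_div_iff₀ (by positivity) hmu]
  nlinarith [mul_pos (pow_pos hom 2) hlam]

theorem posDef_neg_half_smul_add_conjTranspose_of_sq_eq {mu om kp ks ξ a b D : ℝ} (hmu : 0 < mu)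
    (hom : 0 < om) (hom2 : om ^ 2 = mu * ks ^ 2) (hkp : 0 < kp) (h2kp : 2 * kp ^ 2 < ks ^ 2)
    (hξ : ks ^ 2 < ξ ^ 2) (ha : a ^ 2 = ξ ^ 2 - kp ^ 2) (hb : b ^ 2 = ξ ^ 2 - ks ^ 2)
    (ha0 : 0 < a) (hb0 : 0 < b) (hD : D = ξ ^ 2 - a * b) {M : Matrix (Fin 2) (Fin 2) ℂ}
    (hM : M = (I / D) • !![I * ↑(om ^ 2 * a), ↑(ξ * (mu * D - om ^ 2));
      -↑(ξ * (mu * D - om ^ 2)), I * ↑(om ^ 2 * b)]) :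
    ((-(1 / 2 : ℂ)) • (M + Mᴴ)).PosDef := by
  have hD0 : 0 < D := by nlinarith [sq_nonneg (a - b), pow_pos hkp 2]
  rw [neg_half_smul_add_conjTranspose hD0.ne' hM]
  refine posDef_fin_two_of_pos_of_normSq_lt (by positivity) ?_
  have hβ : ξ * (mu * D - om ^ 2) = -(mu * (ξ * b * (a - b))) := by
    rw [hom2, hD]; linear_combination (-(mu * ξ)) * hb
  have hαδ : om ^ 2 * a * (om ^ 2 * b) = mu ^ 2 * (ks ^ 4 * (a * b)) := by
    rw [hom2]; ring
  rw [normSq_neg, normSq_mul, normSq_I, normSq_ofReal, one_mul, div_mul_div_comm, div_mul_div_comm,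
    hβ, hαδ, neg_mul_neg, div_lt_div_iff_of_pos_right (by positivity), ← sq, mul_pow]
  exact mul_lt_mul_of_pos_left (sq_mul_mul_sub_lt hkp h2kp hξ ha hb ha0 hb0) (by positivity)

/-- for `|ξ| > k_s`, with `γ_p = i√(ξ²-k_p²)`, `γ_s = i√(ξ²-k_s²)`
and `M(ξ)` the DtN symbol, the matrix `-Re M(ξ) = -(M + M̄ᵀ)/2` is a positive
definite Hermitian matrix. -/
theorem stmt5 (lam mu om : ℝ) (hlam : 0 < lam) (hmu : 0 < mu) (hom : 0 < om)
    (kp ks : ℝ) (hkp : kp = om / Real.sqrt (2 * mu + lam)) (hks : ks = om / Real.sqrt mu)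
    (ξ : ℝ) (hξ : ks < |ξ|)
    (γp γs : ℂ)
    (hγp : γp = I * (Real.sqrt (ξ ^ 2 - kp ^ 2) : ℂ))
    (hγs : γs = I * (Real.sqrt (ξ ^ 2 - ks ^ 2) : ℂ))
    (M : Matrix (Fin 2) (Fin 2) ℂ)
    (hM : M = (I / ((ξ : ℂ) ^ 2 + γp * γs)) •
      !![(om : ℂ) ^ 2 * γp, -(ξ : ℂ) * om ^ 2 + (ξ : ℂ) * mu * ((ξ : ℂ) ^ 2 + γp * γs);
         (ξ : ℂ) * om ^ 2 - (ξ : ℂ) * mu * ((ξ : ℂ) ^ 2 + γp * γs), (om : ℂ) ^ 2 * γs]) :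
    ((-(1 / 2 : ℂ)) • (M + Mᴴ)).PosDef := by
  have hom2 : om ^ 2 = mu * ks ^ 2 := by
    rw [hks, div_pow, Real.sq_sqrt hmu.le]; field_simp
  have hkp0 : 0 < kp := by rw [hkp]; positivity
  have h2kp : 2 * kp ^ 2 < ks ^ 2 := hkp ▸ hks ▸ two_mul_sq_div_sqrt_lt_sq_div_sqrt hlam hmu hom
  have hξ2 : ks ^ 2 < ξ ^ 2 := by
    simpa only [sq_abs] using pow_lt_pow_left₀ hξ (by rw [hks]; positivity) two_ne_zero
  set a := Real.sqrt (ξ ^ 2 - kp ^ 2)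
  set b := Real.sqrt (ξ ^ 2 - ks ^ 2)
  have hγ : (ξ : ℂ) ^ 2 + γp * γs = ((ξ ^ 2 - a * b : ℝ) : ℂ) := by
    rw [hγp, hγs]; push_cast; linear_combination (a * b : ℂ) * I_sq
  have hM' : M = (I / ((ξ ^ 2 - a * b : ℝ) : ℂ)) • !![I * ↑(om ^ 2 * a),
      ↑(ξ * (mu * (ξ ^ 2 - a * b) - om ^ 2)); -↑(ξ * (mu * (ξ ^ 2 - a * b) - om ^ 2)),
      I * ↑(om ^ 2 * b)] := by
    rw [hM, hγ, hγp, hγs]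
    congr 1
    ext i j
    fin_cases i <;> fin_cases j <;> simp <;> ring
  exact posDef_neg_half_smul_add_conjTranspose_of_sq_eq hmu hom hom2 hkp0 h2kp hξ2
    (Real.sq_sqrt (by nlinarith)) (Real.sq_sqrt (by linarith)) (Real.sqrt_pos.mpr (by nlinarith))
    (Real.sqrt_pos.mpr (by linarith)) rfl hM'
end

section
/- For smooth scalar functions u, v: ℝ² → ℂ and a smooth vector field h: ℝ² → ℝ², the pointwise identity (∇u)ᵀ(∇h + ∇hᵀ - (∇·h)I₂)(∇v) = ∇·[(h·∇u)∇v + (h·∇v)∇u - (∇u·∇v)h] - (h·∇v)Δu - (h·∇u)Δv holds. -/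
open Complex

noncomputable def pd (i : Fin 2) (f : (Fin 2 → ℝ) → ℂ) : (Fin 2 → ℝ) → ℂ :=
  fun x => fderiv ℝ f x (Pi.single i 1)

noncomputable def pdR (i : Fin 2) (f : (Fin 2 → ℝ) → ℝ) : (Fin 2 → ℝ) → ℝ :=
  fun x => fderiv ℝ f x (Pi.single i 1)

noncomputable def lap (f : (Fin 2 → ℝ) → ℂ) : (Fin 2 → ℝ) → ℂ :=
  fun x => pd 0 (pd 0 f) x + pd 1 (pd 1 f) x

lemma contDiff_pd {n : ℕ} {f : (Fin 2 → ℝ) → ℂ} (hf : ContDiff ℝ (n+1) f) (i : Fin 2) :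
    ContDiff ℝ n (pd i f) := by
  have h1 : ContDiff ℝ n (fderiv ℝ f) := hf.fderiv_right (by norm_cast)
  exact h1.clm_apply contDiff_const

lemma pd_comm {f : (Fin 2 → ℝ) → ℂ} (hf : ContDiff ℝ 2 f) (i j : Fin 2) (x : Fin 2 → ℝ) :
    pd i (pd j f) x = pd j (pd i f) x := by
  have hs : IsSymmSndFDerivAt ℝ f x := hf.contDiffAt.isSymmSndFDerivAt (by norm_num)
  have hd : Differentiable ℝ (fderiv ℝ f) :=
    (hf.fderiv_right (m := 1) (by norm_num)).differentiable (by norm_num)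
  have key : ∀ a b : Fin 2, pd a (pd b f) x
      = fderiv ℝ (fderiv ℝ f) x (Pi.single a 1) (Pi.single b 1) := by
    intro a b
    show fderiv ℝ (fun y => (fderiv ℝ f y) (Pi.single b 1)) x (Pi.single a 1) = _
    rw [fderiv_clm_apply (hd.differentiableAt) (differentiableAt_const _)]
    simp
  rw [key, key, hs.eq]

lemma pd_add {f g : (Fin 2 → ℝ) → ℂ} {x : Fin 2 → ℝ} (hf : DifferentiableAt ℝ f x)
    (hg : DifferentiableAt ℝ g x) (j : Fin 2) :
    pd j (fun y => f y + g y) x = pd j f x + pd j g x := by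
  simp [pd, fderiv_fun_add hf hg]

lemma pd_sub {f g : (Fin 2 → ℝ) → ℂ} {x : Fin 2 → ℝ} (hf : DifferentiableAt ℝ f x)
    (hg : DifferentiableAt ℝ g x) (j : Fin 2) :
    pd j (fun y => f y - g y) x = pd j f x - pd j g x := by
  simp [pd, fderiv_fun_sub hf hg]

lemma pd_mul {f g : (Fin 2 → ℝ) → ℂ} {x : Fin 2 → ℝ} (hf : DifferentiableAt ℝ f x)
    (hg : DifferentiableAt ℝ g x) (j : Fin 2) :
    pd j (fun y => f y * g y) x = pd j f x * g x + f x * pd j g x := by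
  simp [pd, fderiv_fun_mul hf hg]; ring

lemma pd_ofReal {g : (Fin 2 → ℝ) → ℝ} {x : Fin 2 → ℝ} (hg : DifferentiableAt ℝ g x) (j : Fin 2) :
    pd j (fun y => ((g y : ℝ) : ℂ)) x = ((pdR j g x : ℝ) : ℂ) := by
  have e : fderiv ℝ (fun y => ((g y : ℝ) : ℂ)) x = Complex.ofRealCLM.comp (fderiv ℝ g x) :=
    (Complex.ofRealCLM.hasFDerivAt.comp x hg.hasFDerivAt).fderiv
  simp [pd, pdR, e]

@[fun_prop] theorem myOfRealDiff : Differentiable ℝ (fun r : ℝ => (r : ℂ)) :=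
  Complex.ofRealCLM.differentiable

/-- for scalar `C²` functions `u, v : ℝ² → ℂ` and a `C¹` vector
field `h : ℝ² → ℝ²`, the pointwise identity
`(∇u)ᵀ(∇h + ∇hᵀ - (∇·h)I₂)(∇v)
  = ∇·[(h·∇u)∇v + (h·∇v)∇u - (∇u·∇v)h] - (h·∇v)Δu - (h·∇u)Δv` holds. -/
theorem stmt17 (u v : (Fin 2 → ℝ) → ℂ) (h : (Fin 2 → ℝ) → Fin 2 → ℝ)
    (hu : ContDiff ℝ 2 u) (hv : ContDiff ℝ 2 v) (hh : ContDiff ℝ 1 h) :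
    ∀ x : Fin 2 → ℝ,
      (∑ i : Fin 2, ∑ j : Fin 2,
        pd i u x *
          ((((pdR j (fun y => h y i) x + pdR i (fun y => h y j) x
              - (if i = j then (pdR 0 (fun y => h y 0) x + pdR 1 (fun y => h y 1) x) else 0)) : ℝ) : ℂ)
          * pd j v x))
      = (∑ j : Fin 2, pd j (fun y =>
            (∑ i : Fin 2, ((h y i : ℝ) : ℂ) * pd i u y) * pd j v y
          + (∑ i : Fin 2, ((h y i : ℝ) : ℂ) * pd i v y) * pd j u y
          - (∑ i : Fin 2, pd i u y * pd i v y) * ((h y j : ℝ) : ℂ)) x)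
        - (∑ i : Fin 2, ((h x i : ℝ) : ℂ) * pd i v x) * lap u x
        - (∑ i : Fin 2, ((h x i : ℝ) : ℂ) * pd i u x) * lap v x := by
  intro x
  have hu2 : ContDiff ℝ ((1:ℕ)+1) u := by exact_mod_cast hu
  have hv2 : ContDiff ℝ ((1:ℕ)+1) v := by exact_mod_cast hv
  have hdu : ∀ i, Differentiable ℝ (pd i u) :=
    fun i => (contDiff_pd hu2 i).differentiable (by norm_num)
  have hdv : ∀ i, Differentiable ℝ (pd i v) :=
    fun i => (contDiff_pd hv2 i).differentiable (by norm_num)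
  have hdh : ∀ i, Differentiable ℝ (fun y => h y i) := by
    intro i
    exact ((contDiff_pi.mp hh i).differentiable (by norm_num))
  have hdhc : ∀ i, Differentiable ℝ (fun y => ((h y i : ℝ) : ℂ)) := by
    intro i
    exact Complex.ofRealCLM.differentiable.comp (hdh i)
  have hcu : pd 0 (pd 1 u) x = pd 1 (pd 0 u) x := pd_comm hu 0 1 x
  have hcv : pd 0 (pd 1 v) x = pd 1 (pd 0 v) x := pd_comm hv 0 1 x
  simp only [Fin.sum_univ_two, lap]
  have h0u : Differentiable ℝ (pd 0 u) := hdu 0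
  have h1u : Differentiable ℝ (pd 1 u) := hdu 1
  have h0v : Differentiable ℝ (pd 0 v) := hdv 0
  have h1v : Differentiable ℝ (pd 1 v) := hdv 1
  have h0h : Differentiable ℝ (fun y => h y 0) := hdh 0
  have h1h : Differentiable ℝ (fun y => h y 1) := hdh 1
  have h0hc : Differentiable ℝ (fun y => ((h y 0 : ℝ) : ℂ)) := hdhc 0
  have h1hc : Differentiable ℝ (fun y => ((h y 1 : ℝ) : ℂ)) := hdhc 1
  simp (disch := fun_prop) only [pd_sub, pd_add, pd_mul, pd_ofReal]
  push_cast
  rw [hcu, hcv]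
  ring
end
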